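/- If x is a locally uniformly rotund (LUR) point of the unit ball of a Banach space X, then x is a denting point of the unit ball. -/

import Mathlib

/-!
Take a norming functional `f` for `x` (`‖f‖ = 1 = f x`). If `y` lies in the unit ball and `f y`
is close to `1`, then `‖x + y‖ ≥ f (x + y)` is close to `2`, so local uniform rotundity forces `y`
to be close to `x`. Hence thin enough slices of the ball cut out by `f` lie in a small ball
around `x`, and have small diameter.
-/

open Filter Topology Metric

section LURPoint

variable {X : Type*} [NormedAddCommGroup X] [NormedSpace ℝ X]

def IsLURPoint (x : X) : Prop :=
  ∀ u : ℕ → X, (∀ n, ‖u n‖ ≤ 1) →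
    Tendsto (fun n => ‖x + u n‖) atTop (𝓝 2) → Tendsto (fun n => ‖x - u n‖) atTop (𝓝 0)

lemma sSup_image_unitClosedBall_of_norming {f : X →L[ℝ] ℝ} (hf : ‖f‖ ≤ 1) {x : X}
    (hx : ‖x‖ ≤ 1) (hfx : f x = 1) : sSup (f '' {w : X | ‖w‖ ≤ 1}) = 1 := by
  refine IsGreatest.csSup_eq ⟨⟨x, hx, hfx⟩, ?_⟩
  rintro - ⟨w, hw, rfl⟩
  exact (Real.le_norm_self _).trans (f.unit_le_opNorm w hw |>.trans hf)

lemma tendsto_norm_add_of_tendsto_apply {f : X →L[ℝ] ℝ} (hf : ‖f‖ ≤ 1) {x : X}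
    (hx : ‖x‖ ≤ 1) (hfx : f x = 1) {u : ℕ → X} (hu : ∀ n, ‖u n‖ ≤ 1)
    (hfu : Tendsto (fun n => f (u n)) atTop (𝓝 1)) :
    Tendsto (fun n => ‖x + u n‖) atTop (𝓝 2) := by
  have lower : ∀ n, 1 + f (u n) ≤ ‖x + u n‖ := fun n =>
    calc 1 + f (u n) = f (x + u n) := by rw [map_add, hfx]
      _ ≤ ‖x + u n‖ := (Real.le_norm_self _).trans ((f.le_of_opNorm_le hf _).trans_eq (one_mul _))
  have upper : ∀ n, ‖x + u n‖ ≤ 2 := fun n =>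
    (norm_add_le _ _).trans (by linarith [hu n])
  have hlim : Tendsto (fun n => 1 + f (u n)) atTop (𝓝 2) := by
    simpa [one_add_one_eq_two] using hfu.const_add 1
  exact tendsto_of_tendsto_of_tendsto_of_le_of_le hlim tendsto_const_nhds lower upper

lemma IsLURPoint.exists_slice_subset_ball {x : X} (hLUR : IsLURPoint x) {f : X →L[ℝ] ℝ}
    (hf : ‖f‖ ≤ 1) (hx : ‖x‖ ≤ 1) (hfx : f x = 1) {ε : ℝ} (hε : 0 < ε) :
    ∃ δ > 0, ∀ y : X, ‖y‖ ≤ 1 → 1 - δ < f y → ‖x - y‖ < ε := by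
  by_contra! h
  choose u hu hfu hxu using fun n : ℕ => h (1 / (n + 1)) Nat.one_div_pos_of_nat
  have hfu_le : ∀ n, f (u n) ≤ 1 := fun n =>
    (Real.le_norm_self _).trans (f.unit_le_opNorm _ (hu n) |>.trans hf)
  have hfu_lim : Tendsto (fun n => f (u n)) atTop (𝓝 1) := by
    have hlim : Tendsto (fun n : ℕ => 1 - 1 / ((n : ℝ) + 1)) atTop (𝓝 1) := by
      simpa using tendsto_one_div_add_atTop_nhds_zero_nat.const_sub (1 : ℝ)
    exact tendsto_of_tendsto_of_tendsto_of_le_of_le hlim tendsto_const_nhds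
      (fun n => (hfu n).le) hfu_le
  have hxu_lim := hLUR u hu (tendsto_norm_add_of_tendsto_apply hf hx hfx hu hfu_lim)
  linarith [ge_of_tendsto hxu_lim (Eventually.of_forall hxu)]

end LURPoint

theorem stmt0 {X : Type*} [NormedAddCommGroup X] [NormedSpace ℝ X]
    (x : X) (hx : ‖x‖ = 1)
    (hLUR : ∀ u : ℕ → X, (∀ n, ‖u n‖ ≤ 1) →
      Tendsto (fun n => ‖x + u n‖) atTop (nhds 2) →
      Tendsto (fun n => ‖x - u n‖) atTop (nhds 0)) :
    ∀ ε > (0 : ℝ), ∃ (f : X →L[ℝ] ℝ) (δ : ℝ), f ≠ 0 ∧ 0 < δ ∧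
      ∀ y ∈ {z : X | ‖z‖ ≤ 1 ∧ sSup (f '' {w : X | ‖w‖ ≤ 1}) - δ < f z},
        ∀ z ∈ {z : X | ‖z‖ ≤ 1 ∧ sSup (f '' {w : X | ‖w‖ ≤ 1}) - δ < f z},
          ‖y - z‖ < ε := by
  intro ε hε
  obtain ⟨f, hf, hfx⟩ := exists_dual_vector ℝ x (by rw [hx]; exact one_ne_zero)
  rw [hx] at hfx
  obtain ⟨δ, hδ, hslice⟩ :=
    IsLURPoint.exists_slice_subset_ball hLUR hf.le hx.le hfx (half_pos hε)
  refine ⟨f, δ, fun h => by simp [h] at hf, hδ, ?_⟩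
  rw [sSup_image_unitClosedBall_of_norming hf.le hx.le hfx]
  rintro y ⟨hy, hfy⟩ z ⟨hz, hfz⟩
  calc ‖y - z‖ ≤ ‖x - y‖ + ‖x - z‖ := by
        rw [← norm_neg (x - y), neg_sub]; exact norm_sub_le_norm_sub_add_norm_sub y x z
    _ < ε := by linarith [hslice y hy hfy, hslice z hz hfz]
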